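/- Assume b₁, …, b₅ are pairwise distinct complex numbers. For every point (x, y₇, y₈) ∈ ℂ³ at which f₁₄, f₁₅ and f₁₆ all vanish, the 3×3 matrix 𝒰₄ whose (i,j)-entry is the partial derivative of f₍₁₃₊ᵢ₎ with respect to the j-th variable (variables ordered x, y₇, y₈), evaluated at (x, y₇, y₈), has rank 2. -/

import Mathlib

open MvPolynomial

/-- `k₃(x) = (x−b₁)(x−b₂)(x−b₃)` as an element of `ℂ[x,y₇,y₈]` (variables `X 0 = x`,
`X 1 = y₇`, `X 2 = y₈`). -/
noncomputable def k3X4 (b : Fin 5 → ℂ) : MvPolynomial (Fin 3) ℂ :=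
  (X 0 - C (b 0)) * (X 0 - C (b 1)) * (X 0 - C (b 2))

/-- `k₂(x) = (x−b₄)(x−b₅)` as an element of `ℂ[x,y₇,y₈]`. -/
noncomputable def k2X4 (b : Fin 5 → ℂ) : MvPolynomial (Fin 3) ℂ :=
  (X 0 - C (b 3)) * (X 0 - C (b 4))

/-- The triple `(f₁₄, f₁₅, f₁₆)` of defining polynomials of the `(3,7,8)` curve. -/
noncomputable def fX4 (b : Fin 5 → ℂ) : Fin 3 → MvPolynomial (Fin 3) ℂ :=
  ![(X 1) ^ 2 - X 2 * k2X4 b,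
    X 1 * X 2 - k2X4 b * k3X4 b,
    (X 2) ^ 2 - X 1 * k3X4 b]

/-! The polynomials `f₁₄, -f₁₆, -f₁₅` are the `2 × 2` minors of `[[y₇, k₂, y₈], [y₈, y₇, k₃]]`.
Expanding the `3 × 3` determinants with a repeated row gives the syzygies
`y₈ f₁₄ - y₇ f₁₅ + k₂ f₁₆ = 0 = k₃ f₁₄ - y₈ f₁₅ + y₇ f₁₆`, so along the curve the Jacobian has
a nontrivial left kernel and vanishing determinant. A nonzero `2 × 2` minor of the Jacobian is
`3 y₇²` when `y₇ ≠ 0`; otherwise `y₈ = 0` and `x` is a root of `k₂ k₃ = ∏ (x - bᵢ)`, which is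
simple because the `bᵢ` are distinct, and `(k₂ k₃)'(x) ≠ 0` produces a nonzero minor. -/

theorem Matrix.le_rank_of_det_submatrix_ne_zero {K m n : Type*} [Field K] [Fintype n] {k : ℕ}
    (A : Matrix m n K) {r : Fin k → m} {c : Fin k → n} (h : (A.submatrix r c).det ≠ 0) :
    k ≤ A.rank := by
  simpa [Matrix.rank_of_det_ne_zero h] using A.rank_submatrix_le r c

theorem Matrix.rank_lt_card_of_det_eq_zero {K n : Type*} [Field K] [Fintype n] [DecidableEq n]
    (A : Matrix n n K) (h : A.det = 0) : A.rank < Fintype.card n := by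
  obtain ⟨v, hv, hAv⟩ := Matrix.exists_mulVec_eq_zero_iff.mpr h
  have hker : 0 < Module.finrank K (LinearMap.ker A.mulVecLin) :=
    Module.finrank_pos_iff_exists_ne_zero.mpr ⟨⟨v, hAv⟩, fun h0 => hv congr(($h0).1)⟩
  have := LinearMap.finrank_range_add_finrank_ker A.mulVecLin
  rw [Module.finrank_fintype_fun_eq_card] at this
  rw [Matrix.rank]
  omega

section MinorsJacobian

variable {K : Type*} [Field K] {y₇ y₈ k₂ k₃ k₂' k₃' : K}

/-- The Jacobian of `(f₁₄, f₁₅, f₁₆)` in `(x, y₇, y₈)`, where `k₂, k₃, k₂', k₃'` stand for the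
values of `k₂, k₃` and their derivatives at `x`. -/
def minorsJacobian (y₇ y₈ k₂ k₃ k₂' k₃' : K) : Matrix (Fin 3) (Fin 3) K :=
  !![-(y₈ * k₂'), 2 * y₇, -k₂;
     -(k₂' * k₃ + k₂ * k₃'), y₈, y₇;
     -(y₇ * k₃'), -k₃, 2 * y₈]

theorem det_minorsJacobian_eq_zero
    (h₁ : y₇ ^ 2 = y₈ * k₂) (h₂ : y₇ * y₈ = k₂ * k₃) (h₃ : y₈ ^ 2 = y₇ * k₃) :
    (minorsJacobian y₇ y₈ k₂ k₃ k₂' k₃').det = 0 := by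
  rw [minorsJacobian, Matrix.det_fin_three]
  simp only [Matrix.of_apply, Matrix.cons_val', Matrix.cons_val_zero, Matrix.cons_val_one,
    Matrix.cons_val, Matrix.cons_val_fin_one]
  linear_combination (-2 * y₇ * k₃') * h₁ + (k₂' * k₃ + k₂ * k₃') * h₂ - (2 * y₈ * k₂') * h₃

theorem two_le_rank_minorsJacobian [CharZero K]
    (h₁ : y₇ ^ 2 = y₈ * k₂) (h₂ : y₇ * y₈ = k₂ * k₃) (h₃ : y₈ ^ 2 = y₇ * k₃)
    (hsimple : k₂ * k₃ = 0 → k₂' * k₃ + k₂ * k₃' ≠ 0) :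
    2 ≤ (minorsJacobian y₇ y₈ k₂ k₃ k₂' k₃').rank := by
  by_cases hy₇ : y₇ = 0
  · have hy₈ : y₈ = 0 := pow_eq_zero_iff two_ne_zero |>.mp (by rw [h₃, hy₇, zero_mul])
    have hs := hsimple (by rw [← h₂, hy₇, zero_mul])
    by_cases hk₂ : k₂ = 0
    · have hk₃ : k₃ ≠ 0 := by rintro rfl; simp [hk₂] at hs
      refine Matrix.le_rank_of_det_submatrix_ne_zero _ (r := ![1, 2]) (c := ![0, 1]) ?_
      rw [Matrix.det_fin_two]
      show -(k₂' * k₃ + k₂ * k₃') * -k₃ - y₈ * -(y₇ * k₃') ≠ 0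
      rw [show -(k₂' * k₃ + k₂ * k₃') * -k₃ - y₈ * -(y₇ * k₃') = (k₂' * k₃ + k₂ * k₃') * k₃ by
        rw [hy₈]; ring]
      exact mul_ne_zero hs hk₃
    · refine Matrix.le_rank_of_det_submatrix_ne_zero _ (r := ![0, 1]) (c := ![0, 2]) ?_
      rw [Matrix.det_fin_two]
      show -(y₈ * k₂') * y₇ - -k₂ * -(k₂' * k₃ + k₂ * k₃') ≠ 0
      rw [show -(y₈ * k₂') * y₇ - -k₂ * -(k₂' * k₃ + k₂ * k₃') = -(k₂ * (k₂' * k₃ + k₂ * k₃')) by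
        rw [hy₇]; ring]
      exact neg_ne_zero.mpr (mul_ne_zero hk₂ hs)
  · refine Matrix.le_rank_of_det_submatrix_ne_zero _ (r := ![0, 1]) (c := ![1, 2]) ?_
    rw [Matrix.det_fin_two]
    show 2 * y₇ * y₇ - -k₂ * y₈ ≠ 0
    rw [show 2 * y₇ * y₇ - -k₂ * y₈ = 3 * y₇ ^ 2 by linear_combination -h₁]
    exact mul_ne_zero three_ne_zero (pow_ne_zero 2 hy₇)

theorem rank_minorsJacobian_eq_two [CharZero K]
    (h₁ : y₇ ^ 2 = y₈ * k₂) (h₂ : y₇ * y₈ = k₂ * k₃) (h₃ : y₈ ^ 2 = y₇ * k₃)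
    (hsimple : k₂ * k₃ = 0 → k₂' * k₃ + k₂ * k₃' ≠ 0) :
    (minorsJacobian y₇ y₈ k₂ k₃ k₂' k₃').rank = 2 := by
  refine le_antisymm ?_ (two_le_rank_minorsJacobian h₁ h₂ h₃ hsimple)
  have := Matrix.rank_lt_card_of_det_eq_zero _ (det_minorsJacobian_eq_zero (k₂' := k₂')
    (k₃' := k₃') h₁ h₂ h₃)
  rw [Fintype.card_fin] at this
  omega

end MinorsJacobian

theorem pderiv_k2X4_of_ne_zero (b : Fin 5 → ℂ) {j : Fin 3} (hj : j ≠ 0) :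
    pderiv j (k2X4 b) = 0 := by
  simp [k2X4, pderiv_X, hj]

theorem pderiv_k3X4_of_ne_zero (b : Fin 5 → ℂ) {j : Fin 3} (hj : j ≠ 0) :
    pderiv j (k3X4 b) = 0 := by
  simp [k3X4, pderiv_X, hj]

theorem jacobian_fX4 (b : Fin 5 → ℂ) (p : Fin 3 → ℂ) :
    (Matrix.of fun i j : Fin 3 => eval p (pderiv j (fX4 b i))) =
      minorsJacobian (p 1) (p 2) (eval p (k2X4 b)) (eval p (k3X4 b))
        (eval p (pderiv 0 (k2X4 b))) (eval p (pderiv 0 (k3X4 b))) := by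
  ext i j
  fin_cases i <;> fin_cases j <;>
    simp [minorsJacobian, fX4, pderiv_X, pderiv_k2X4_of_ne_zero, pderiv_k3X4_of_ne_zero]
  ring

theorem eval_pderiv_k2X4_mul_k3X4_ne_zero {b : Fin 5 → ℂ} (hb : Function.Injective b)
    {p : Fin 3 → ℂ} (h : eval p (k2X4 b) * eval p (k3X4 b) = 0) :
    eval p (pderiv 0 (k2X4 b)) * eval p (k3X4 b) +
      eval p (k2X4 b) * eval p (pderiv 0 (k3X4 b)) ≠ 0 := by
  set P : Polynomial ℂ := ∏ i, (Polynomial.X - Polynomial.C (b i))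
  have hP : P.Separable := Polynomial.separable_prod_X_sub_C_iff.mpr hb
  have hval : eval p (k2X4 b) * eval p (k3X4 b) = P.eval (p 0) := by
    simp [P, k2X4, k3X4, Fin.prod_univ_five]; ring
  have hder : eval p (pderiv 0 (k2X4 b)) * eval p (k3X4 b) +
      eval p (k2X4 b) * eval p (pderiv 0 (k3X4 b)) = (Polynomial.derivative P).eval (p 0) := by
    simp [P, k2X4, k3X4, Fin.prod_univ_five, Polynomial.derivative_mul]; ring
  rw [hder]
  simpa using hP.aeval_derivative_ne_zero (x := p 0) (by simpa [← hval] using h)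

theorem rank_U4 (b : Fin 5 → ℂ) (hb : Function.Injective b) (p : Fin 3 → ℂ)
    (hp : ∀ i : Fin 3, MvPolynomial.eval p (fX4 b i) = 0) :
    (Matrix.of fun i j : Fin 3 =>
        MvPolynomial.eval p (MvPolynomial.pderiv j (fX4 b i))).rank = 2 := by
  have h₁ : p 1 ^ 2 = p 2 * eval p (k2X4 b) := by simpa [fX4, sub_eq_zero] using hp 0
  have h₂ : p 1 * p 2 = eval p (k2X4 b) * eval p (k3X4 b) := by
    simpa [fX4, sub_eq_zero] using hp 1
  have h₃ : p 2 ^ 2 = p 1 * eval p (k3X4 b) := by simpa [fX4, sub_eq_zero] using hp 2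
  rw [jacobian_fX4]
  exact rank_minorsJacobian_eq_two h₁ h₂ h₃ (eval_pderiv_k2X4_mul_k3X4_ne_zero hb)
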